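/- Let f, g: ℝⁿ → ℝ ∪ {∞} be proper, closed, convex, let ρ > 0, γ = ρ⁻¹, α ∈ (0,1), and suppose z⁰ = ρ⁻¹v⁰. Define v^{k+1} = (1-α)v^k + α R_{ρ(g*∘(-Id))}(R_{ρf*}(v^k)) and z^{k+1} = (1-α)z^k + α R_{γg}(R_{γf}(z^k)). Then z^k = ρ⁻¹v^k for all k ≥ 0. -/

import Mathlib

open scoped RealInnerProductSpace

/-- Fenchel conjugate of an extended-real-valued function. -/
noncomputable def econj {n : ℕ} (g : EuclideanSpace ℝ (Fin n) → EReal)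
    (y : EuclideanSpace ℝ (Fin n)) : EReal :=
  ⨆ x, ((⟪y, x⟫ : ℝ) : EReal) - g x

/-- `g` is proper: somewhere finite and never `-∞`. -/
def EProper {n : ℕ} (g : EuclideanSpace ℝ (Fin n) → EReal) : Prop :=
  (∃ x, g x ≠ ⊤) ∧ ∀ x, g x ≠ ⊥

/-- Convexity for extended-real-valued functions. -/
def EConvex {n : ℕ} (g : EuclideanSpace ℝ (Fin n) → EReal) : Prop :=
  ∀ x y : EuclideanSpace ℝ (Fin n), ∀ a b : ℝ, 0 ≤ a → 0 ≤ b → a + b = 1 →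
    g (a • x + b • y) ≤ (a : EReal) * g x + (b : EReal) * g y

/-- `p` is the proximal point `prox_{γ g}(z)`, i.e. it minimizes
`g(·) + ‖· - z‖²/(2γ)`. -/
def IsProx {n : ℕ} (g : EuclideanSpace ℝ (Fin n) → EReal) (γ : ℝ)
    (z p : EuclideanSpace ℝ (Fin n)) : Prop :=
  ∀ y, g p + ((‖p - z‖^2 / (2*γ) : ℝ) : EReal) ≤ g y + ((‖y - z‖^2 / (2*γ) : ℝ) : EReal)

/-!
Moreau's identity `prox_{ρ f*}(ρ x) = ρ (x - prox_{ρ⁻¹ f}(x))` comes from the first-order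
characterisation of the proximal point: `(x - p) / γ` is a subgradient of `f` at
`p = prox_{γ f}(x)`, so `p` is a subgradient of `f*` at that slope, and a subgradient
inequality of this shape determines the proximal point of `f*`. Applied to `f` and to
`g ∘ (-Id)` it gives `R_{ρ f*}(ρ x) = -ρ R_{γ f}(x)` and `R_{ρ (g* ∘ (-Id))}(-ρ w) = ρ R_{γ g}(w)`,
so each ADMM step on `ρ z` is `ρ` times the Douglas–Rachford step on `z`.
-/

open Filter Topology

lemma le_of_forall_le_add_mul {a b K : ℝ} (h : ∀ t : ℝ, 0 < t → t ≤ 1 → a ≤ b + t * K) :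
    a ≤ b := by
  have hlim : Tendsto (fun t : ℝ => b + t * K) (𝓝[>] 0) (𝓝 b) := by
    have : Tendsto (fun t : ℝ => b + t * K) (𝓝 0) (𝓝 (b + 0 * K)) :=
      (continuous_const.add (continuous_id.mul continuous_const)).tendsto 0
    simpa using this.mono_left nhdsWithin_le_nhds
  exact ge_of_tendsto hlim
    (eventually_of_mem (Ioc_mem_nhdsGT one_pos) fun t ht => h t ht.1 ht.2)

section

variable {n : ℕ}

local notation "E" => EuclideanSpace ℝ (Fin n)

def IsSubgradient (f : E → EReal) (p s : E) : Prop :=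
  ∃ c : ℝ, f p = c ∧ ∀ x, ((c + ⟪s, x - p⟫ : ℝ) : EReal) ≤ f x

lemma IsProx.ne_top_of_ne_top {f : E → EReal} {γ : ℝ} {z p y : E} (h : IsProx f γ z p)
    (hy : f y ≠ ⊤) : f p ≠ ⊤ := by
  intro hp
  have := h y
  rw [hp, EReal.top_add_coe, top_le_iff] at this
  exact EReal.add_ne_top hy (EReal.coe_ne_top _) this

lemma IsProx.isSubgradient {f : E → EReal} {γ : ℝ} {z p : E} (hf : EProper f)
    (hfc : EConvex f) (hγ : 0 < γ) (h : IsProx f γ z p) :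
    IsSubgradient f p (γ⁻¹ • (z - p)) := by
  obtain ⟨⟨x₀, hx₀⟩, hbot⟩ := hf
  obtain ⟨c, hc⟩ : ∃ c : ℝ, f p = c :=
    ⟨(f p).toReal, (EReal.coe_toReal (h.ne_top_of_ne_top hx₀) (hbot p)).symm⟩
  refine ⟨c, hc, fun x => ?_⟩
  rcases eq_or_ne (f x) ⊤ with hx | hx
  · simp [hx]
  lift f x to ℝ using ⟨hx, hbot x⟩ with d hd
  rw [EReal.coe_le_coe_iff, real_inner_smul_left]
  refine le_of_forall_le_add_mul (K := ‖x - p‖^2 / (2 * γ)) fun t ht0 ht1 => ?_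
  -- Test the prox inequality against `y` and bound `f y` by convexity; dividing the result
  -- by `t` leaves the subgradient inequality up to the error `t * K`.
  set y := p + t • (x - p)
  have hconv : f y ≤ (((1 - t) * c + t * d : ℝ) : EReal) := by
    have := hfc p x (1 - t) t (by linarith) ht0.le (by ring)
    rwa [hc, ← hd, show (1 - t) • p + t • x = y by module, ← EReal.coe_mul, ← EReal.coe_mul,
      ← EReal.coe_add] at this
  have hprox := h y
  lift f y to ℝ using ⟨ne_top_of_le_ne_top (EReal.coe_ne_top _) hconv, hbot y⟩ with e
  rw [EReal.coe_le_coe_iff] at hconv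
  rw [hc, ← EReal.coe_add, ← EReal.coe_add, EReal.coe_le_coe_iff] at hprox
  have hnorm : ‖y - z‖^2 = ‖p - z‖^2 - 2 * t * ⟪z - p, x - p⟫ + t^2 * ‖x - p‖^2 := by
    rw [show y - z = (p - z) + t • (x - p) by module, norm_add_sq_real, real_inner_smul_right,
      norm_smul, Real.norm_of_nonneg ht0.le, ← neg_sub z p, inner_neg_left]
    ring
  rw [hnorm] at hprox
  refine le_of_mul_le_mul_left ?_ ht0
  field_simp at hprox ⊢
  nlinarith

lemma IsSubgradient.econj {f : E → EReal} {p s : E} (h : IsSubgradient f p s) :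
    IsSubgradient (econj f) s p := by
  obtain ⟨c, hc, hsub⟩ := h
  refine ⟨⟪s, p⟫ - c, le_antisymm (iSup_le fun x => ?_) ?_, fun y => ?_⟩
  · calc ((⟪s, x⟫ : ℝ) : EReal) - f x
        ≤ ((⟪s, x⟫ : ℝ) : EReal) - ((c + ⟪s, x - p⟫ : ℝ) : EReal) :=
          EReal.sub_le_sub le_rfl (hsub x)
      _ = ((⟪s, p⟫ - c : ℝ) : EReal) := by
          rw [← EReal.coe_sub, inner_sub_right]
          ring_nf
  · rw [EReal.coe_sub, ← hc]
    exact le_iSup (fun x => ((⟪s, x⟫ : ℝ) : EReal) - f x) p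
  · have : ⟪s, p⟫ - c + ⟪p, y - s⟫ = ⟪y, p⟫ - c := by
      rw [inner_sub_right, real_inner_comm p y, real_inner_comm p s]
      ring
    rw [this, EReal.coe_sub, ← hc]
    exact le_iSup (fun x => ((⟪y, x⟫ : ℝ) : EReal) - f x) p

lemma IsProx.eq_of_isSubgradient {F : E → EReal} {ρ : ℝ} {v u q : E} (hρ : 0 < ρ)
    (hu : IsSubgradient F u (ρ⁻¹ • (v - u))) (hq : IsProx F ρ v q) : q = u := by
  obtain ⟨c, hc, hsub⟩ := hu
  have hprox := hq u
  rw [hc] at hprox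
  have hsubq := hsub q
  lift F q to ℝ using ⟨hq.ne_top_of_ne_top (y := u) (by simp [hc]),
    fun h => by simp [h] at hsubq⟩ with d
  rw [← EReal.coe_add, ← EReal.coe_add, EReal.coe_le_coe_iff] at hprox
  rw [EReal.coe_le_coe_iff, real_inner_smul_left] at hsubq
  have hexp : ‖q - v‖^2 = ‖q - u‖^2 - 2 * ⟪v - u, q - u⟫ + ‖u - v‖^2 := by
    rw [show q - v = (q - u) - (v - u) by abel, norm_sub_sq_real, norm_sub_rev u v,
      real_inner_comm]
  -- The prox inequality at `u` plus the subgradient inequality at `q` is `‖q - u‖² ≤ 0`.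
  have hnonpos : ‖q - u‖^2 ≤ 0 := by
    rw [hexp] at hprox
    field_simp at hprox hsubq
    nlinarith
  simpa [sub_eq_zero] using le_antisymm hnonpos (sq_nonneg _)

lemma IsProx.eq_of_isProx_econj {f : E → EReal} {ρ : ℝ} {x p q : E} (hf : EProper f)
    (hfc : EConvex f) (hρ : 0 < ρ) (hp : IsProx f ρ⁻¹ x p) (hq : IsProx (econj f) ρ (ρ • x) q) :
    q = ρ • (x - p) := by
  have hsub := (hp.isSubgradient hf hfc (inv_pos.mpr hρ)).econj
  rw [inv_inv] at hsub
  refine hq.eq_of_isSubgradient hρ ?_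
  rwa [← smul_sub, sub_sub_cancel, inv_smul_smul₀ hρ.ne']

lemma EProper.comp_neg {g : E → EReal} (hg : EProper g) : EProper fun x => g (-x) :=
  ⟨let ⟨x, hx⟩ := hg.1; ⟨-x, show g (-(-x)) ≠ ⊤ by rwa [neg_neg]⟩, fun x => hg.2 (-x)⟩

lemma EConvex.comp_neg {g : E → EReal} (hg : EConvex g) : EConvex fun x => g (-x) :=
  fun x y a b ha hb hab => by simpa only [neg_add, smul_neg] using hg (-x) (-y) a b ha hb hab

lemma IsProx.comp_neg {g : E → EReal} {γ : ℝ} {z p : E} (h : IsProx g γ (-z) p) :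
    IsProx (fun x => g (-x)) γ z (-p) := fun y => by
  show g (-(-p)) + _ ≤ g (-y) + _
  rw [neg_neg, show -p - z = -(p - -z) by abel, show y - z = -(-y - -z) by abel, norm_neg,
    norm_neg]
  exact h (-y)

lemma econj_comp_neg (g : E → EReal) : econj (fun x => g (-x)) = fun μ => econj g (-μ) := by
  ext μ
  rw [econj, econj, ← (Equiv.neg E).iSup_comp]
  simp only [Equiv.neg_apply, inner_neg_left, inner_neg_right, neg_neg]

lemma IsProx.eq_of_isProx_econj_neg {g : E → EReal} {ρ : ℝ} {x p q : E} (hg : EProper g)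
    (hgc : EConvex g) (hρ : 0 < ρ) (hp : IsProx g ρ⁻¹ (-x) p)
    (hq : IsProx (fun μ => econj g (-μ)) ρ (ρ • x) q) : q = ρ • (x + p) := by
  rw [← econj_comp_neg] at hq
  rw [hp.comp_neg.eq_of_isProx_econj hg.comp_neg hgc.comp_neg hρ hq, sub_neg_eq_add]

end

theorem stmt13_general {n : ℕ} (f g : EuclideanSpace ℝ (Fin n) → EReal)
    (hfp : EProper f) (hfc : EConvex f)
    (hgp : EProper g) (hgc : EConvex g)
    (ρ γ : ℝ) (hρ : 0 < ρ) (hγ : γ = ρ⁻¹)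
    (α : ℝ)
    (proxfs proxgs proxf proxg : EuclideanSpace ℝ (Fin n) → EuclideanSpace ℝ (Fin n))
    (hproxfs : ∀ z, IsProx (econj f) ρ z (proxfs z))
    (hproxgs : ∀ z, IsProx (fun μ => econj g (-μ)) ρ z (proxgs z))
    (hproxf : ∀ z, IsProx f γ z (proxf z))
    (hproxg : ∀ z, IsProx g γ z (proxg z))
    (v z : ℕ → EuclideanSpace ℝ (Fin n))
    (hv : ∀ k, v (k+1) = (1 - α) • v k +
      α • ((2:ℝ) • proxgs ((2:ℝ) • proxfs (v k) - v k) - ((2:ℝ) • proxfs (v k) - v k)))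
    (hz : ∀ k, z (k+1) = (1 - α) • z k +
      α • ((2:ℝ) • proxg ((2:ℝ) • proxf (z k) - z k) - ((2:ℝ) • proxf (z k) - z k)))
    (h0 : z 0 = ρ⁻¹ • v 0) :
    ∀ k, z k = ρ⁻¹ • v k := by
  subst hγ
  intro k
  induction k with
  | zero => exact h0
  | succ k ih =>
    have hvk : v k = ρ • z k := by rw [ih, smul_inv_smul₀ hρ.ne']
    set x := z k
    set w := (2:ℝ) • proxf x - x
    have hreflect_f : (2:ℝ) • proxfs (v k) - v k = ρ • -w := by
      have hmoreau : proxfs (ρ • x) = ρ • (x - proxf x) :=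
        (hproxf x).eq_of_isProx_econj hfp hfc hρ (hproxfs _)
      rw [hvk, hmoreau]
      module
    have hmoreau_g : proxgs (ρ • -w) = ρ • (-w + proxg w) :=
      IsProx.eq_of_isProx_econj_neg hgp hgc hρ (by rw [neg_neg]; exact hproxg w) (hproxgs _)
    rw [hz k, hv k, hreflect_f, hmoreau_g, hvk]
    match_scalars <;> field_simp <;> ring

theorem stmt13 {n : ℕ} (f g : EuclideanSpace ℝ (Fin n) → EReal)
    (hfp : EProper f) (hflsc : LowerSemicontinuous f) (hfc : EConvex f)
    (hgp : EProper g) (hglsc : LowerSemicontinuous g) (hgc : EConvex g)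
    (ρ γ : ℝ) (hρ : 0 < ρ) (hγ : γ = ρ⁻¹)
    (α : ℝ) (hα0 : 0 < α) (hα1 : α < 1)
    (proxfs proxgs proxf proxg : EuclideanSpace ℝ (Fin n) → EuclideanSpace ℝ (Fin n))
    (hproxfs : ∀ z, IsProx (econj f) ρ z (proxfs z))
    (hproxgs : ∀ z, IsProx (fun μ => econj g (-μ)) ρ z (proxgs z))
    (hproxf : ∀ z, IsProx f γ z (proxf z))
    (hproxg : ∀ z, IsProx g γ z (proxg z))
    (v z : ℕ → EuclideanSpace ℝ (Fin n))
    (hv : ∀ k, v (k+1) = (1 - α) • v k +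
      α • ((2:ℝ) • proxgs ((2:ℝ) • proxfs (v k) - v k) - ((2:ℝ) • proxfs (v k) - v k)))
    (hz : ∀ k, z (k+1) = (1 - α) • z k +
      α • ((2:ℝ) • proxg ((2:ℝ) • proxf (z k) - z k) - ((2:ℝ) • proxf (z k) - z k)))
    (h0 : z 0 = ρ⁻¹ • v 0) :
    ∀ k, z k = ρ⁻¹ • v k :=
  stmt13_general f g hfp hfc hgp hgc ρ γ hρ hγ α proxfs proxgs proxf proxg hproxfs hproxgs hproxf
    hproxg v z hv hz h0
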